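/- Let $(X_t)_{t\in\mathbb{Z}}$ be a stationary max-stable process with representation $X_t = \int_E^\vee f_t\,dM^\alpha_\nu$, $f_t \ge 0$, $f_t \in L^\alpha(\nu)$. Then for $a, b > 0$ and sets $A = (a,\infty)$, $B = (b,\infty)$, the extremogram exists and equals $\gamma_{AB}(h) = \frac{\int_E f_0^\alpha(y) \wedge (\frac{a}{b} f_h(y))^\alpha\,\nu(dy)}{a^\alpha \int_E f_0^\alpha(y)\,\nu(dy)}$, where the extremogram is $\gamma_{AB}(h) = \lim_{n\to\infty} n P(a_n^{-1}X_0 \in A, a_n^{-1}X_h \in B)$ with $a_n = n^{1/\alpha}(\int_E f_0^\alpha d\nu)^{1/\alpha}$. -/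

import Mathlib

/-!
By inclusion–exclusion, `P(X₀ > u, X_h > v) = 1 - F₀(u) - F_h(v) + F(u, v)`. Since
`a_n ^ α = n ∫ f₀^α`, each of the three distribution functions at `(a_n a, a_n b)` has the form
`exp (-c / n)`: with `c = a^{-α}`, `c = b^{-α}` (stationarity), and
`c = ∫ max ((f₀/a)^α, (f_h/b)^α) / ∫ f₀^α` (the exponent measure is homogeneous of degree `-α`).
As `n (1 - exp (-c / n)) → c`, the limit is `a^{-α} + b^{-α} - c`, and `min = x + y - max`
turns it into the stated ratio.
-/

open Filter Topology MeasureTheory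

theorem tendsto_mul_one_sub_exp_neg_div (c : ℝ) :
    Tendsto (fun x : ℝ => x * (1 - Real.exp (-(c / x)))) atTop (𝓝 c) := by
  have hderiv : HasDerivAt (fun t : ℝ => 1 - Real.exp (-(c * t))) c 0 := by
    simpa using ((((hasDerivAt_id (0 : ℝ)).const_mul c).neg.exp).const_sub 1)
  refine (hderiv.tendsto_slope_zero_right.comp tendsto_inv_atTop_nhdsGT_zero).congr' ?_
  filter_upwards [eventually_gt_atTop 0] with x hx
  simp [div_eq_mul_inv]

theorem probReal_setOf_gt_and_gt {Ω : Type*} [MeasurableSpace Ω] {P : Measure Ω}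
    [IsProbabilityMeasure P] {X Y : Ω → ℝ} (hX : Measurable X) (hY : Measurable Y) (u v : ℝ) :
    P.real {ω | X ω > u ∧ Y ω > v}
      = 1 - P.real {ω | X ω ≤ u} - P.real {ω | Y ω ≤ v} + P.real {ω | X ω ≤ u ∧ Y ω ≤ v} := by
  have hXu : MeasurableSet {ω | X ω ≤ u} := measurableSet_le hX measurable_const
  have hYv : MeasurableSet {ω | Y ω ≤ v} := measurableSet_le hY measurable_const
  have hset : {ω | X ω > u ∧ Y ω > v} = ({ω | X ω ≤ u} ∪ {ω | Y ω ≤ v})ᶜ := by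
    ext; simp
  have hinter : {ω | X ω ≤ u} ∩ {ω | Y ω ≤ v} = {ω | X ω ≤ u ∧ Y ω ≤ v} := rfl
  rw [hset, probReal_compl_eq_one_sub (hXu.union hYv), ← hinter]
  linarith [measureReal_union_add_inter (μ := P) (s := {ω | X ω ≤ u}) hYv]

theorem integral_min_add_integral_max {α : Type*} [MeasurableSpace α] {μ : Measure α}
    {F G : α → ℝ} (hF : Integrable F μ) (hG : Integrable G μ) :
    ∫ x, min (F x) (G x) ∂μ + ∫ x, max (F x) (G x) ∂μ = ∫ x, F x ∂μ + ∫ x, G x ∂μ := by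
  have hmin : Integrable (fun x => min (F x) (G x)) μ := hF.inf hG
  have hmax : Integrable (fun x => max (F x) (G x)) μ := hF.sup hG
  rw [← integral_add hmin hmax, ← integral_add hF hG]
  simp_rw [min_add_max]

theorem max_div_mul_rpow {x y t a b α : ℝ} (hx : 0 ≤ x) (hy : 0 ≤ y) (ht : 0 < t)
    (ha : 0 ≤ a) (hb : 0 ≤ b) :
    max ((x / (t * a)) ^ α) ((y / (t * b)) ^ α)
      = (t ^ α)⁻¹ * max ((x / a) ^ α) ((y / b) ^ α) := by
  rw [mul_max_of_nonneg _ _ (by positivity), ← Real.inv_rpow ht.le,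
    ← Real.mul_rpow (inv_nonneg.2 ht.le) (by positivity),
    ← Real.mul_rpow (inv_nonneg.2 ht.le) (by positivity)]
  congr 2 <;> field_simp

theorem max_rpow_mul_div {x y a b α : ℝ} (hx : 0 ≤ x) (hy : 0 ≤ y) (ha : 0 < a) (hb : 0 ≤ b) :
    max (x ^ α) ((a / b * y) ^ α) = a ^ α * max ((x / a) ^ α) ((y / b) ^ α) := by
  rw [mul_max_of_nonneg _ _ (by positivity), ← Real.mul_rpow ha.le (by positivity),
    ← Real.mul_rpow ha.le (by positivity), mul_div_cancel₀ x ha.ne',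
    div_mul_eq_mul_div, mul_div_assoc]

theorem integral_min_rpow_mul_div {E : Type*} [MeasurableSpace E] {ν : Measure E}
    {α a b : ℝ} (ha : 0 < a) (hb : 0 ≤ b) {f g : E → ℝ} (hf : ∀ y, 0 ≤ f y) (hg : ∀ y, 0 ≤ g y)
    (hfα : Integrable (fun y => f y ^ α) ν) (hgα : Integrable (fun y => g y ^ α) ν) :
    ∫ y, min (f y ^ α) ((a / b * g y) ^ α) ∂ν
      = ∫ y, f y ^ α ∂ν + (a / b) ^ α * ∫ y, g y ^ α ∂ν
        - a ^ α * ∫ y, max ((f y / a) ^ α) ((g y / b) ^ α) ∂ν := by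
  have hscale : ∀ y, (a / b * g y) ^ α = (a / b) ^ α * g y ^ α := fun y =>
    Real.mul_rpow (by positivity) (hg y)
  have hgα' : Integrable (fun y => (a / b * g y) ^ α) ν := by
    simpa only [hscale] using hgα.const_mul ((a / b) ^ α)
  rw [eq_sub_of_add_eq (integral_min_add_integral_max hfα hgα')]
  simp_rw [max_rpow_mul_div (hf _) (hg _) ha hb, hscale, integral_const_mul]

theorem maxstable_extremogram_general
    {Ω E : Type*} [MeasurableSpace Ω] [MeasurableSpace E]
    (P : Measure Ω) [IsProbabilityMeasure P]
    (ν : Measure E)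
    (α : ℝ) (hα : 0 < α)
    (f0 fh : E → ℝ)
    (hf0 : ∀ y, 0 ≤ f0 y) (hfh : ∀ y, 0 ≤ fh y)
    (hint0 : Integrable (fun y => f0 y ^ α) ν)
    (hinth : Integrable (fun y => fh y ^ α) ν)
    -- stationarity
    (hstat : ∫ y, fh y ^ α ∂ν = ∫ y, f0 y ^ α ∂ν)
    (hpos : 0 < ∫ y, f0 y ^ α ∂ν)
    (X0 Xh : Ω → ℝ) (hX0 : Measurable X0) (hXh : Measurable Xh)
    -- bivariate max-stable (Fréchet) distribution of `(X₀, X_h)`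
    (hjoint : ∀ x0 x1 : ℝ, 0 < x0 → 0 < x1 →
      (P {ω | X0 ω ≤ x0 ∧ Xh ω ≤ x1}).toReal
        = Real.exp (-∫ y, max ((f0 y / x0) ^ α) ((fh y / x1) ^ α) ∂ν))
    (hmarg0 : ∀ x : ℝ, 0 < x →
      (P {ω | X0 ω ≤ x}).toReal = Real.exp (-(x ^ (-α)) * ∫ y, f0 y ^ α ∂ν))
    (hmargh : ∀ x : ℝ, 0 < x →
      (P {ω | Xh ω ≤ x}).toReal = Real.exp (-(x ^ (-α)) * ∫ y, fh y ^ α ∂ν))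
    (a b : ℝ) (ha : 0 < a) (hb : 0 < b)
    (aseq : ℕ → ℝ)
    (haseq : ∀ n : ℕ, aseq n = (n : ℝ) ^ (1/α) * (∫ y, f0 y ^ α ∂ν) ^ (1/α)) :
    Tendsto (fun n : ℕ =>
        (n : ℝ) * (P {ω | X0 ω > aseq n * a ∧ Xh ω > aseq n * b}).toReal)
      atTop
      (𝓝 ((∫ y, min (f0 y ^ α) ((a / b * fh y) ^ α) ∂ν)
        / (a ^ α * ∫ y, f0 y ^ α ∂ν))) := by
  set I := ∫ y, f0 y ^ α ∂ν
  set V := ∫ y, max ((f0 y / a) ^ α) ((fh y / b) ^ α) ∂ν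
  have hlimit : (∫ y, min (f0 y ^ α) ((a / b * fh y) ^ α) ∂ν) / (a ^ α * I)
      = (a ^ α)⁻¹ + (b ^ α)⁻¹ - V / I := by
    rw [integral_min_rpow_mul_div ha hb.le hf0 hfh hint0 hinth, hstat,
      Real.div_rpow ha.le hb.le]
    field_simp
    ring
  rw [hlimit]
  refine ((((tendsto_mul_one_sub_exp_neg_div _).add (tendsto_mul_one_sub_exp_neg_div _)).sub
    (tendsto_mul_one_sub_exp_neg_div _)).comp tendsto_natCast_atTop_atTop).congr' ?_
  filter_upwards [eventually_gt_atTop 0] with n hn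
  have hn : (0 : ℝ) < n := Nat.cast_pos.2 hn
  have hs : 0 < aseq n := haseq n ▸ by positivity
  have hsα : aseq n ^ α = n * I := by
    rw [haseq n, ← Real.mul_rpow hn.le hpos.le, one_div, Real.rpow_inv_rpow (by positivity) hα.ne']
  have hmargScaled : ∀ c : ℝ, 0 < c → -(aseq n * c) ^ (-α) * I = -((c ^ α)⁻¹ / n) := by
    intro c hc
    rw [Real.rpow_neg (by positivity), Real.mul_rpow hs.le hc.le, hsα]
    field_simp
  have hjointScaled : ∫ y, max ((f0 y / (aseq n * a)) ^ α) ((fh y / (aseq n * b)) ^ α) ∂ν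
      = V / I / n := by
    simp_rw [max_div_mul_rpow (hf0 _) (hfh _) hs ha.le hb.le, integral_const_mul, hsα]
    change (n * I)⁻¹ * V = _
    field_simp
  simp only [Function.comp_apply, ← measureReal_def] at hjoint hmarg0 hmargh ⊢
  rw [probReal_setOf_gt_and_gt hX0 hXh, hmarg0 _ (by positivity), hmargh _ (by positivity),
    hstat, hjoint _ _ (by positivity) (by positivity), hmargScaled a ha, hmargScaled b hb,
    hjointScaled]
  ring

/-- Extremogram of a stationary max-stable process for sets `A = (a,∞)`, `B = (b,∞)`:
with `a_n = n^{1/α} (∫ f₀^α dν)^{1/α}`,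
`γ_{AB}(h) = lim_n n P(X₀ > a_n a, X_h > a_n b)
           = ∫ f₀^α ∧ ((a/b) f_h)^α dν / (a^α ∫ f₀^α dν)`. -/
theorem maxstable_extremogram
    {Ω E : Type*} [MeasurableSpace Ω] [MeasurableSpace E]
    (P : Measure Ω) [IsProbabilityMeasure P]
    (ν : Measure E) [SigmaFinite ν]
    (α : ℝ) (hα : 0 < α)
    (f0 fh : E → ℝ) (hf0m : Measurable f0) (hfhm : Measurable fh)
    (hf0 : ∀ y, 0 ≤ f0 y) (hfh : ∀ y, 0 ≤ fh y)
    (hint0 : Integrable (fun y => f0 y ^ α) ν)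
    (hinth : Integrable (fun y => fh y ^ α) ν)
    -- stationarity
    (hstat : ∫ y, fh y ^ α ∂ν = ∫ y, f0 y ^ α ∂ν)
    (hpos : 0 < ∫ y, f0 y ^ α ∂ν)
    (X0 Xh : Ω → ℝ) (hX0 : Measurable X0) (hXh : Measurable Xh)
    -- bivariate max-stable (Fréchet) distribution of `(X₀, X_h)`
    (hjoint : ∀ x0 x1 : ℝ, 0 < x0 → 0 < x1 →
      (P {ω | X0 ω ≤ x0 ∧ Xh ω ≤ x1}).toReal
        = Real.exp (-∫ y, max ((f0 y / x0) ^ α) ((fh y / x1) ^ α) ∂ν))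
    (hmarg0 : ∀ x : ℝ, 0 < x →
      (P {ω | X0 ω ≤ x}).toReal = Real.exp (-(x ^ (-α)) * ∫ y, f0 y ^ α ∂ν))
    (hmargh : ∀ x : ℝ, 0 < x →
      (P {ω | Xh ω ≤ x}).toReal = Real.exp (-(x ^ (-α)) * ∫ y, fh y ^ α ∂ν))
    (hjointint : ∀ x0 x1 : ℝ, 0 < x0 → 0 < x1 →
      Integrable (fun y => max ((f0 y / x0) ^ α) ((fh y / x1) ^ α)) ν)
    (a b : ℝ) (ha : 0 < a) (hb : 0 < b)
    (aseq : ℕ → ℝ)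
    (haseq : ∀ n : ℕ, aseq n = (n : ℝ) ^ (1/α) * (∫ y, f0 y ^ α ∂ν) ^ (1/α)) :
    Tendsto (fun n : ℕ =>
        (n : ℝ) * (P {ω | X0 ω > aseq n * a ∧ Xh ω > aseq n * b}).toReal)
      atTop
      (𝓝 ((∫ y, min (f0 y ^ α) ((a / b * fh y) ^ α) ∂ν)
        / (a ^ α * ∫ y, f0 y ^ α ∂ν))) :=
  maxstable_extremogram_general P ν α hα f0 fh hf0 hfh hint0 hinth hstat hpos X0 Xh hX0 hXh hjoint
    hmarg0 hmargh a b ha hb aseq haseq
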